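/- There is a bijection between the set F_{n,1} of Frobenius seaweed data for sp_{2n} with one central arc and the set of Frobenius seaweeds of sl_n whose type-A datum (a'|b) has last part of a' equal to 1: given (a|b) with Σa_i = n−1, Σb_j = n and Γ^C_n(a|b) a single segment, set a' = (a_1,...,a_s,1); then Γ^A(a'|b) is a connected type-A meander graph on n vertices (a single segment), i.e., the corresponding seaweed in gl_n has index 1. -/

import Mathlib

/-- The arc of a block starting at offset `o` of size `m`: the `k`-th nested arc
joins vertices `o+k` and `o+(m-1-k)` (0-based), for `2k+1 < m`. -/
def inBlockArc (o m i j : ℕ) : Prop :=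
  ∃ k : ℕ, 2 * k + 1 < m ∧ i = o + k ∧ j = o + (m - 1 - k)

/-- Arcs determined by a composition, drawn block by block starting at offset `o`. -/
def arcs : List ℕ → ℕ → ℕ → ℕ → Prop
  | [], _, _, _ => False
  | m :: rest, o, i, j => inBlockArc o m i j ∨ arcs rest (o + m) i j

/-- The type-A meander graph of the pair of compositions `(a | b)` on `n` vertices
(0-based): arcs of `a` above the line, arcs of `b` below. -/
def meanderA (n : ℕ) (a b : List ℕ) : SimpleGraph (Fin n) where
  Adj i j := i ≠ j ∧ (arcs a 0 i.val j.val ∨ arcs a 0 j.val i.val ∨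
      arcs b 0 i.val j.val ∨ arcs b 0 j.val i.val)
  symm := by
    constructor
    intro i j h
    exact ⟨Ne.symm h.1, by tauto⟩
  loopless := by
    constructor
    intro i h
    exact h.1 rfl

/-- The symmetric composition `(a₁,…,a_s, 2d, a_s,…,a₁)` of `2n`, where
`d = n - Σ aᵢ` (a zero middle part is omitted). -/
def tildeComp (n : ℕ) (a : List ℕ) : List ℕ :=
  (a ++ [2 * (n - a.sum)] ++ a.reverse).filter (fun x => x != 0)

/-- The type-C meander graph `Γ^C_n(a|b)` on `2n` vertices. -/
def meanderC (n : ℕ) (a b : List ℕ) : SimpleGraph (Fin (2 * n)) :=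
  meanderA (2 * n) (tildeComp n a) (tildeComp n b)

/-- The reflection `σ` sending vertex `i` to `2n + 1 - i` (0-based: `i ↦ 2n - 1 - i`). -/
def sigmaRefl (n : ℕ) : Fin (2 * n) → Fin (2 * n) :=
  fun i => ⟨2 * n - 1 - i.val, by have := i.isLt; omega⟩

/-- A connected component is a cycle if every vertex in it has degree 2. -/
def IsCycleComp {V : Type*} (G : SimpleGraph V) (c : G.ConnectedComponent) : Prop :=
  ∀ v, G.connectedComponentMk v = c → (G.neighborSet v).ncard = 2

/-- A connected component is a segment if it is not a cycle. -/
def IsSegmentComp {V : Type*} (G : SimpleGraph V) (c : G.ConnectedComponent) : Prop :=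
  ¬ IsCycleComp G c

/-- The number of cycles of a graph. -/
noncomputable def numCycles {V : Type*} (G : SimpleGraph V) : ℕ :=
  {c : G.ConnectedComponent | IsCycleComp G c}.ncard

/-- The number of segments of a graph. -/
noncomputable def numSegments {V : Type*} (G : SimpleGraph V) : ℕ :=
  {c : G.ConnectedComponent | IsSegmentComp G c}.ncard

/-- A component of a type-C meander graph is `σ`-stable if `σ` maps it to itself. -/
def SigmaStable (n : ℕ) (G : SimpleGraph (Fin (2 * n))) (c : G.ConnectedComponent) : Prop :=
  ∀ v, G.connectedComponentMk v = c → G.connectedComponentMk (sigmaRefl n v) = c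

/-- The number of non-`σ`-stable segments of `Γ^C_n(a|b)`. -/
noncomputable def numNonStableSegments (n : ℕ) (a b : List ℕ) : ℕ :=
  {c : (meanderC n a b).ConnectedComponent |
    IsSegmentComp (meanderC n a b) c ∧ ¬ SigmaStable n (meanderC n a b) c}.ncard

/-- The topological index `T_n(a|b)` of `Γ^C_n(a|b)`:
(number of cycles) + ½·(number of non-`σ`-stable segments). -/
noncomputable def topIndex (n : ℕ) (a b : List ℕ) : ℚ :=
  (numCycles (meanderC n a b) : ℚ) + (numNonStableSegments n a b : ℚ) / 2

/-- A composition: all parts are positive. -/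
def IsComposition (a : List ℕ) : Prop := ∀ x ∈ a, 0 < x

/-- Frobenius seaweed data for `sp_{2n}` with exactly one central arc
(normalised so that the first composition sums to `n - 1`). -/
def F1 (n : ℕ) : Set (List ℕ × List ℕ) :=
  {p | IsComposition p.1 ∧ IsComposition p.2 ∧ p.1.sum = n - 1 ∧ p.2.sum = n ∧
    topIndex n p.1 p.2 = 0}

/-- Type-A data `(a'|b)` of `n` whose meander graph is a single segment,
i.e. Frobenius seaweeds of `sl_n` (index 1 in `gl_n`). -/
def AFrobSeg (n : ℕ) : Set (List ℕ × List ℕ) :=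
  {p | IsComposition p.1 ∧ IsComposition p.2 ∧ p.1.sum = n ∧ p.2.sum = n ∧
    (meanderA n p.1 p.2).Connected ∧ numCycles (meanderA n p.1 p.2) = 0}

section ArcsBasic

lemma arcs_nil (o i j : ℕ) : ¬ arcs [] o i j := fun h => h

lemma arcs_cons (m : ℕ) (rest : List ℕ) (o i j : ℕ) :
    arcs (m :: rest) o i j ↔ inBlockArc o m i j ∨ arcs rest (o + m) i j := Iff.rfl

lemma arcs_bounds : ∀ (l : List ℕ) (o i j : ℕ), arcs l o i j → o ≤ i ∧ i < j ∧ j < o + l.sum := by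
  intro l
  induction l with
  | nil => intro o i j h; exact absurd h (arcs_nil o i j)
  | cons m t ih =>
    intro o i j h
    rcases h with ⟨k, hk, hi, hj⟩ | h
    · simp only [List.sum_cons]; omega
    · have := ih (o + m) i j h; simp only [List.sum_cons]; omega

lemma arcs_append (l1 l2 : List ℕ) (o i j : ℕ) :
    arcs (l1 ++ l2) o i j ↔ arcs l1 o i j ∨ arcs l2 (o + l1.sum) i j := by
  induction l1 generalizing o with
  | nil => simp [arcs]
  | cons m t ih =>
    simp only [List.cons_append, arcs_cons, ih (o + m), List.sum_cons, or_assoc,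
      Nat.add_assoc]

lemma arcs_shift (l : List ℕ) (o t i j : ℕ) :
    arcs l (o + t) (t + i) (t + j) ↔ arcs l o i j := by
  induction l generalizing o with
  | nil => simp [arcs]
  | cons m rest ih =>
    simp only [arcs_cons]
    constructor
    · rintro (⟨k, hk, hi, hj⟩ | h)
      · exact Or.inl ⟨k, hk, by omega, by omega⟩
      · refine Or.inr ((ih (o + m)).mp ?_)
        have : o + t + m = o + m + t := by omega
        rwa [this] at h
    · rintro (⟨k, hk, hi, hj⟩ | h)
      · exact Or.inl ⟨k, hk, by omega, by omega⟩
      · have := (ih (o + m)).mpr h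
        have e : o + m + t = o + t + m := by omega
        rw [e] at this
        exact Or.inr this

lemma arcs_shift0 (l : List ℕ) (t i j : ℕ) :
    arcs l t i j ↔ ∃ i0 j0, arcs l 0 i0 j0 ∧ i = t + i0 ∧ j = t + j0 := by
  constructor
  · intro h
    have hb := arcs_bounds l t i j h
    refine ⟨i - t, j - t, ?_, by omega, by omega⟩
    have : arcs l (0 + t) (t + (i - t)) (t + (j - t)) ↔ arcs l 0 (i - t) (j - t) :=
      arcs_shift l 0 t (i - t) (j - t)
    apply this.mp
    have e1 : 0 + t = t := by omega
    have e2 : t + (i - t) = i := by omega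
    have e3 : t + (j - t) = j := by omega
    rw [e1, e2, e3]; exact h
  · rintro ⟨i0, j0, h, rfl, rfl⟩
    have := (arcs_shift l 0 t i0 j0).mpr h
    rwa [Nat.zero_add] at this

lemma arcs_reverse {l : List ℕ} {o i j : ℕ} (h : arcs l.reverse o i j) :
    arcs l o (2 * o + l.sum - 1 - j) (2 * o + l.sum - 1 - i) := by
  induction l generalizing i j with
  | nil => simpa [arcs] using h
  | cons m rest ih =>
    rw [List.reverse_cons, arcs_append] at h
    rcases h with h | h
    · have hb := arcs_bounds rest.reverse o i j h
      rw [List.sum_reverse] at hb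
      have h2 := ih h
      refine Or.inr ?_
      have e := (arcs_shift rest o m (2 * o + rest.sum - 1 - j) (2 * o + rest.sum - 1 - i)).mpr h2
      have e1 : m + (2 * o + rest.sum - 1 - j) = 2 * o + (m :: rest).sum - 1 - j := by
        simp only [List.sum_cons]; omega
      have e2 : m + (2 * o + rest.sum - 1 - i) = 2 * o + (m :: rest).sum - 1 - i := by
        simp only [List.sum_cons]; omega
      rwa [e1, e2] at e
    · rw [List.sum_reverse] at h
      rcases h with ⟨k, hk, hi, hj⟩ | h
      · refine Or.inl ⟨k, hk, by simp only [List.sum_cons]; omega, by simp only [List.sum_cons]; omega⟩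
      · exact absurd h (arcs_nil _ _ _)

lemma arcs_reverse' {l : List ℕ} {i j : ℕ} (h : arcs l 0 i j) :
    arcs l.reverse 0 (l.sum - 1 - j) (l.sum - 1 - i) := by
  have h' : arcs l.reverse.reverse 0 i j := by rwa [List.reverse_reverse]
  have := arcs_reverse h'
  simpa [List.sum_reverse] using this

end ArcsBasic
section Tilde

lemma comp_filter {l : List ℕ} (h : IsComposition l) : l.filter (fun x => x != 0) = l := by
  apply List.filter_eq_self.mpr
  intro x hx
  simpa using (h x hx).ne'

lemma comp_reverse {l : List ℕ} (h : IsComposition l) : IsComposition l.reverse := by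
  intro x hx; exact h x (List.mem_reverse.mp hx)

lemma tildeA_eq {n : ℕ} {a : List ℕ} (hn : 1 ≤ n) (ha : IsComposition a)
    (hsa : a.sum = n - 1) : tildeComp n a = a ++ [2] ++ a.reverse := by
  unfold tildeComp
  have h1 : n - a.sum = 1 := by omega
  rw [h1]
  rw [List.filter_append, List.filter_append, comp_filter ha, comp_filter (comp_reverse ha)]
  norm_num

lemma tildeB_eq {n : ℕ} {b : List ℕ} (hb : IsComposition b)
    (hsb : b.sum = n) : tildeComp n b = b ++ b.reverse := by
  unfold tildeComp
  have h1 : n - b.sum = 0 := by omega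
  rw [h1]
  rw [List.filter_append, List.filter_append, comp_filter hb, comp_filter (comp_reverse hb)]
  norm_num

lemma arcsTop_iff {n : ℕ} {a : List ℕ} (hn : 1 ≤ n) (ha : IsComposition a)
    (hsa : a.sum = n - 1) (i j : ℕ) :
    arcs (tildeComp n a) 0 i j ↔
      arcs a 0 i j ∨ (i = n - 1 ∧ j = n) ∨
      (∃ i0 j0, arcs a 0 i0 j0 ∧ i = 2 * n - 1 - j0 ∧ j = 2 * n - 1 - i0) := by
  rw [tildeA_eq hn ha hsa, arcs_append, arcs_append]
  have hsum : (a ++ [2]).sum = n + 1 := by simp [hsa]; omega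
  rw [hsum]
  constructor
  · rintro ((h | h) | h)
    · exact Or.inl h
    · rw [Nat.zero_add, hsa] at h
      rcases h with ⟨k, hk, hi, hj⟩ | h
      · exact Or.inr (Or.inl (by omega))
      · exact absurd h (arcs_nil _ _ _)
    · rw [Nat.zero_add] at h
      rw [arcs_shift0] at h
      obtain ⟨i', j', h, rfl, rfl⟩ := h
      have hb := arcs_bounds _ _ _ _ h
      rw [List.sum_reverse, hsa] at hb
      have h2 := arcs_reverse h
      refine Or.inr (Or.inr ⟨_, _, h2, by omega, by omega⟩)
  · rintro (h | ⟨rfl, rfl⟩ | ⟨i0, j0, h, rfl, rfl⟩)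
    · exact Or.inl (Or.inl h)
    · refine Or.inl (Or.inr ?_)
      rw [Nat.zero_add, hsa]
      exact Or.inl ⟨0, by omega, by omega, by omega⟩
    · refine Or.inr ?_
      rw [Nat.zero_add]
      have hb := arcs_bounds _ _ _ _ h
      have h2 := arcs_reverse' h
      rw [hsa] at h2 hb
      have := (arcs_shift a.reverse 0 (n + 1) (n - 1 - 1 - j0) (n - 1 - 1 - i0)).mpr h2
      rw [Nat.zero_add] at this
      have e1 : n + 1 + (n - 1 - 1 - j0) = 2 * n - 1 - j0 := by omega
      have e2 : n + 1 + (n - 1 - 1 - i0) = 2 * n - 1 - i0 := by omega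
      rwa [e1, e2] at this

lemma arcsBot_iff {n : ℕ} {b : List ℕ} (hb : IsComposition b)
    (hsb : b.sum = n) (i j : ℕ) :
    arcs (tildeComp n b) 0 i j ↔
      arcs b 0 i j ∨
      (∃ i0 j0, arcs b 0 i0 j0 ∧ i = 2 * n - 1 - j0 ∧ j = 2 * n - 1 - i0) := by
  rw [tildeB_eq hb hsb, arcs_append]
  rw [Nat.zero_add, hsb]
  constructor
  · rintro (h | h)
    · exact Or.inl h
    · rw [arcs_shift0] at h
      obtain ⟨i', j', h, rfl, rfl⟩ := h
      have hbd := arcs_bounds _ _ _ _ h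
      rw [List.sum_reverse, hsb] at hbd
      have h2 := arcs_reverse h
      exact Or.inr ⟨_, _, h2, by omega, by omega⟩
  · rintro (h | ⟨i0, j0, h, rfl, rfl⟩)
    · exact Or.inl h
    · refine Or.inr ?_
      have hbd := arcs_bounds _ _ _ _ h
      have h2 := arcs_reverse' h
      rw [hsb] at h2 hbd
      have := (arcs_shift b.reverse 0 n (n - 1 - j0) (n - 1 - i0)).mpr h2
      rw [Nat.zero_add] at this
      have e1 : n + (n - 1 - j0) = 2 * n - 1 - j0 := by omega
      have e2 : n + (n - 1 - i0) = 2 * n - 1 - i0 := by omega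
      rwa [e1, e2] at this

end Tilde
section Graphs

variable {n : ℕ} {a b : List ℕ} (hn : 1 ≤ n) (ha : IsComposition a) (hb : IsComposition b)
  (hsa : a.sum = n - 1) (hsb : b.sum = n)

lemma adjC_iff (x y : Fin (2 * n)) : (meanderC n a b).Adj x y ↔ x ≠ y ∧
    (arcs (tildeComp n a) 0 x.val y.val ∨ arcs (tildeComp n a) 0 y.val x.val ∨
     arcs (tildeComp n b) 0 x.val y.val ∨ arcs (tildeComp n b) 0 y.val x.val) := Iff.rfl

include hsa in
lemma bndA {i j : ℕ} (h : arcs a 0 i j) : i < j ∧ j < n - 1 := by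
  have := arcs_bounds a 0 i j h; omega

include hsb in
lemma bndB {i j : ℕ} (h : arcs b 0 i j) : i < j ∧ j < n := by
  have := arcs_bounds b 0 i j h; omega

include hn ha hb hsa hsb in
lemma arcC_cases {i j : ℕ}
    (h : arcs (tildeComp n a) 0 i j ∨ arcs (tildeComp n b) 0 i j) :
    (i < j ∧ j < n ∧ ((arcs a 0 i j ∨ arcs b 0 i j))) ∨
    (i = n - 1 ∧ j = n) ∨
    (n ≤ i ∧ i < j ∧ j < 2 * n ∧
      ∃ i0 j0, (arcs a 0 i0 j0 ∨ arcs b 0 i0 j0) ∧ i = 2 * n - 1 - j0 ∧ j = 2 * n - 1 - i0) := by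
  rcases h with h | h
  · rw [arcsTop_iff hn ha hsa] at h
    rcases h with h | h | ⟨i0, j0, h0, rfl, rfl⟩
    · have := bndA hsa h; exact Or.inl ⟨by omega, by omega, Or.inl h⟩
    · exact Or.inr (Or.inl h)
    · have := bndA hsa h0
      exact Or.inr (Or.inr ⟨by omega, by omega, by omega, i0, j0, Or.inl h0, rfl, rfl⟩)
  · rw [arcsBot_iff hb hsb] at h
    rcases h with h | ⟨i0, j0, h0, rfl, rfl⟩
    · have := bndB hsb h; exact Or.inl ⟨by omega, by omega, Or.inr h⟩
    · have := bndB hsb h0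
      exact Or.inr (Or.inr ⟨by omega, by omega, by omega, i0, j0, Or.inr h0, rfl, rfl⟩)

include hn ha hb hsa hsb in
lemma cross_edge {x y : Fin (2 * n)} (h : (meanderC n a b).Adj x y)
    (hx : x.val < n) (hy : n ≤ y.val) : x.val = n - 1 ∧ y.val = n := by
  rw [adjC_iff] at h
  obtain ⟨-, h⟩ := h
  have h' : (arcs (tildeComp n a) 0 x.val y.val ∨ arcs (tildeComp n b) 0 x.val y.val) ∨
      (arcs (tildeComp n a) 0 y.val x.val ∨ arcs (tildeComp n b) 0 y.val x.val) := by tauto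
  rcases h' with h' | h'
  · rcases arcC_cases hn ha hb hsa hsb h' with h2 | h2 | h2 <;> omega
  · rcases arcC_cases hn ha hb hsa hsb h' with h2 | h2 | h2 <;> omega

include hn ha hb hsa hsb in
lemma left_edge {x y : Fin (2 * n)} (h : (meanderC n a b).Adj x y)
    (hx : x.val < n) (hy : y.val < n) :
    (meanderA n (a ++ [1]) b).Adj ⟨x.val, hx⟩ ⟨y.val, hy⟩ := by
  rw [adjC_iff] at h
  obtain ⟨hne, h⟩ := h
  have hxy : x.val ≠ y.val := fun e => hne (Fin.ext e)
  refine ⟨fun e => hxy (by simpa using e), ?_⟩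
  have key : ∀ i j : ℕ, i < n → j < n →
      (arcs (tildeComp n a) 0 i j ∨ arcs (tildeComp n b) 0 i j) →
      (arcs (a ++ [1]) 0 i j ∨ arcs b 0 i j) := by
    intro i j hi hj hh
    rcases arcC_cases hn ha hb hsa hsb hh with ⟨-, -, h2 | h2⟩ | h2 | h2
    · exact Or.inl ((arcs_append a [1] 0 i j).mpr (Or.inl h2))
    · exact Or.inr h2
    · omega
    · omega
  rcases h with h | h | h | h
  · rcases key _ _ hx hy (Or.inl h) with h2 | h2
    · exact Or.inl h2
    · exact Or.inr (Or.inr (Or.inl h2))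
  · rcases key _ _ hy hx (Or.inl h) with h2 | h2
    · exact Or.inr (Or.inl h2)
    · exact Or.inr (Or.inr (Or.inr h2))
  · rcases key _ _ hx hy (Or.inr h) with h2 | h2
    · exact Or.inl h2
    · exact Or.inr (Or.inr (Or.inl h2))
  · rcases key _ _ hy hx (Or.inr h) with h2 | h2
    · exact Or.inr (Or.inl h2)
    · exact Or.inr (Or.inr (Or.inr h2))

include hn ha hb hsa hsb in
lemma right_edge {x y : Fin (2 * n)} (h : (meanderC n a b).Adj x y)
    (hx : n ≤ x.val) (hy : n ≤ y.val) :
    (meanderA n (a ++ [1]) b).Adj ⟨2 * n - 1 - x.val, by have := x.isLt; omega⟩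
      ⟨2 * n - 1 - y.val, by have := y.isLt; omega⟩ := by
  rw [adjC_iff] at h
  obtain ⟨hne, h⟩ := h
  have hxy : x.val ≠ y.val := fun e => hne (Fin.ext e)
  have hx2 := x.isLt
  have hy2 := y.isLt
  refine ⟨fun e => absurd (show 2 * n - 1 - x.val = 2 * n - 1 - y.val by simpa using e)
    (by omega), ?_⟩
  have key : ∀ i j : ℕ, n ≤ i → n ≤ j →
      (arcs (tildeComp n a) 0 i j ∨ arcs (tildeComp n b) 0 i j) →
      (arcs (a ++ [1]) 0 (2 * n - 1 - j) (2 * n - 1 - i) ∨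
        arcs b 0 (2 * n - 1 - j) (2 * n - 1 - i)) := by
    intro i j hi hj hh
    rcases arcC_cases hn ha hb hsa hsb hh with h2 | h2 | ⟨-, -, -, i0, j0, h0, rfl, rfl⟩
    · omega
    · omega
    · rcases h0 with h0 | h0
      · have hbd := bndA hsa h0
        have e1 : 2 * n - 1 - (2 * n - 1 - i0) = i0 := by omega
        have e2 : 2 * n - 1 - (2 * n - 1 - j0) = j0 := by omega
        rw [e1, e2]
        exact Or.inl ((arcs_append a [1] 0 i0 j0).mpr (Or.inl h0))
      · have hbd := bndB hsb h0
        have e1 : 2 * n - 1 - (2 * n - 1 - i0) = i0 := by omega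
        have e2 : 2 * n - 1 - (2 * n - 1 - j0) = j0 := by omega
        rw [e1, e2]
        exact Or.inr h0
  rcases h with h | h | h | h
  · rcases key _ _ hx hy (Or.inl h) with h2 | h2
    · exact Or.inr (Or.inl h2)
    · exact Or.inr (Or.inr (Or.inr h2))
  · rcases key _ _ hy hx (Or.inl h) with h2 | h2
    · exact Or.inl h2
    · exact Or.inr (Or.inr (Or.inl h2))
  · rcases key _ _ hx hy (Or.inr h) with h2 | h2
    · exact Or.inr (Or.inl h2)
    · exact Or.inr (Or.inr (Or.inr h2))
  · rcases key _ _ hy hx (Or.inr h) with h2 | h2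
    · exact Or.inl h2
    · exact Or.inr (Or.inr (Or.inl h2))

include hn ha hb hsa hsb in
lemma lift_left {u v : Fin n} (h : (meanderA n (a ++ [1]) b).Adj u v) :
    (meanderC n a b).Adj ⟨u.val, by have := u.isLt; omega⟩ ⟨v.val, by have := v.isLt; omega⟩ := by
  obtain ⟨hne, h⟩ := h
  have hne' : u.val ≠ v.val := fun e => hne (Fin.ext e)
  rw [adjC_iff]
  refine ⟨fun e => hne' (by simpa using e), ?_⟩
  have key : ∀ i j : ℕ, (arcs (a ++ [1]) 0 i j ∨ arcs b 0 i j) →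
      (arcs (tildeComp n a) 0 i j ∨ arcs (tildeComp n b) 0 i j) := by
    intro i j hh
    rcases hh with hh | hh
    · rcases (arcs_append a [1] 0 i j).mp hh with h2 | h2
      · exact Or.inl ((arcsTop_iff hn ha hsa i j).mpr (Or.inl h2))
      · rcases h2 with ⟨k, hk, -, -⟩ | h2
        · omega
        · exact absurd h2 (arcs_nil _ _ _)
    · exact Or.inr ((arcsBot_iff hb hsb i j).mpr (Or.inl hh))
  rcases h with h | h | h | h
  · rcases key _ _ (Or.inl h) with h2 | h2
    · exact Or.inl h2
    · exact Or.inr (Or.inr (Or.inl h2))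
  · rcases key _ _ (Or.inl h) with h2 | h2
    · exact Or.inr (Or.inl h2)
    · exact Or.inr (Or.inr (Or.inr h2))
  · rcases key _ _ (Or.inr h) with h2 | h2
    · exact Or.inl h2
    · exact Or.inr (Or.inr (Or.inl h2))
  · rcases key _ _ (Or.inr h) with h2 | h2
    · exact Or.inr (Or.inl h2)
    · exact Or.inr (Or.inr (Or.inr h2))

include hn ha hb hsa hsb in
lemma lift_right {u v : Fin n} (h : (meanderA n (a ++ [1]) b).Adj u v) :
    (meanderC n a b).Adj ⟨2 * n - 1 - u.val, by have := u.isLt; omega⟩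
      ⟨2 * n - 1 - v.val, by have := v.isLt; omega⟩ := by
  obtain ⟨hne, h⟩ := h
  have hu := u.isLt
  have hv := v.isLt
  have hne' : u.val ≠ v.val := fun e => hne (Fin.ext e)
  rw [adjC_iff]
  refine ⟨fun e => absurd (show 2 * n - 1 - u.val = 2 * n - 1 - v.val by simpa using e)
    (by omega), ?_⟩
  have key : ∀ i j : ℕ, i < n → j < n → (arcs (a ++ [1]) 0 i j ∨ arcs b 0 i j) →
      (arcs (tildeComp n a) 0 (2 * n - 1 - j) (2 * n - 1 - i) ∨
        arcs (tildeComp n b) 0 (2 * n - 1 - j) (2 * n - 1 - i)) := by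
    intro i j hi hj hh
    rcases hh with hh | hh
    · rcases (arcs_append a [1] 0 i j).mp hh with h2 | h2
      · exact Or.inl ((arcsTop_iff hn ha hsa _ _).mpr (Or.inr (Or.inr ⟨i, j, h2, rfl, rfl⟩)))
      · rcases h2 with ⟨k, hk, -, -⟩ | h2
        · omega
        · exact absurd h2 (arcs_nil _ _ _)
    · exact Or.inr ((arcsBot_iff hb hsb _ _).mpr (Or.inr ⟨i, j, hh, rfl, rfl⟩))
  rcases h with h | h | h | h
  · rcases key _ _ u.isLt v.isLt (Or.inl h) with h2 | h2
    · exact Or.inr (Or.inl h2)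
    · exact Or.inr (Or.inr (Or.inr h2))
  · rcases key _ _ v.isLt u.isLt (Or.inl h) with h2 | h2
    · exact Or.inl h2
    · exact Or.inr (Or.inr (Or.inl h2))
  · rcases key _ _ u.isLt v.isLt (Or.inr h) with h2 | h2
    · exact Or.inr (Or.inl h2)
    · exact Or.inr (Or.inr (Or.inr h2))
  · rcases key _ _ v.isLt u.isLt (Or.inr h) with h2 | h2
    · exact Or.inl h2
    · exact Or.inr (Or.inr (Or.inl h2))

include hn ha hsa in
lemma bridge_edge :
    (meanderC n a b).Adj ⟨n - 1, by omega⟩ ⟨n, by omega⟩ := by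
  rw [adjC_iff]
  refine ⟨fun e => absurd (show n - 1 = n by simpa using e) (by omega), ?_⟩
  exact Or.inl ((arcsTop_iff hn ha hsa _ _).mpr (Or.inr (Or.inl ⟨rfl, rfl⟩)))

end Graphs
section GraphTools

lemma reachable_map {V W : Type*} {G : SimpleGraph V} {H : SimpleGraph W} (f : V → W)
    (hf : ∀ x y, G.Adj x y → f x = f y ∨ H.Adj (f x) (f y)) {x y : V}
    (h : G.Reachable x y) : H.Reachable (f x) (f y) := by
  obtain ⟨w⟩ := h
  induction w with
  | nil => exact SimpleGraph.Reachable.refl _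
  | cons hadj p ih =>
    rcases hf _ _ hadj with he | hA
    · rw [he]; exact ih
    · exact hA.reachable.trans ih

lemma partner_unique : ∀ (l : List ℕ) (o v w w' : ℕ),
    (arcs l o v w ∨ arcs l o w v) → (arcs l o v w' ∨ arcs l o w' v) → w = w' := by
  intro l
  induction l with
  | nil => intro o v w w' h1 _; rcases h1 with h | h <;> exact absurd h (arcs_nil _ _ _)
  | cons m t ih =>
    intro o v w w' h1 h2
    have head_spec : ∀ x y : ℕ, (inBlockArc o m x y ∨ inBlockArc o m y x) →
        o ≤ x ∧ x < o + m ∧ o ≤ y ∧ y < o + m ∧ y = o + (m - 1 - (x - o)) := by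
      rintro x y (⟨k, hk, hx, hy⟩ | ⟨k, hk, hy, hx⟩) <;> omega
    have tail_spec : ∀ x y : ℕ, (arcs t (o + m) x y ∨ arcs t (o + m) y x) →
        o + m ≤ x ∧ o + m ≤ y := by
      rintro x y (h | h) <;> (have := arcs_bounds t (o + m) _ _ h; omega)
    have n1 : (inBlockArc o m v w ∨ inBlockArc o m w v) ∨
        (arcs t (o + m) v w ∨ arcs t (o + m) w v) := by
      rcases h1 with (x | x) | (x | x)
      · exact Or.inl (Or.inl x)
      · exact Or.inr (Or.inl x)
      · exact Or.inl (Or.inr x)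
      · exact Or.inr (Or.inr x)
    have n2 : (inBlockArc o m v w' ∨ inBlockArc o m w' v) ∨
        (arcs t (o + m) v w' ∨ arcs t (o + m) w' v) := by
      rcases h2 with (x | x) | (x | x)
      · exact Or.inl (Or.inl x)
      · exact Or.inr (Or.inl x)
      · exact Or.inl (Or.inr x)
      · exact Or.inr (Or.inr x)
    rcases n1 with hh1 | ht1 <;> rcases n2 with hh2 | ht2
    · have e1 := head_spec v w hh1; have e2 := head_spec v w' hh2; omega
    · have e1 := head_spec v w hh1; have e2 := tail_spec v w' ht2; omega
    · have e1 := tail_spec v w ht1; have e2 := head_spec v w' hh2; omega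
    · exact ih (o + m) v w w' ht1 ht2

lemma exists_uncovered : ∀ (l : List ℕ) (o : ℕ), (∃ m ∈ l, Odd m) →
    ∃ v, o ≤ v ∧ v < o + l.sum ∧ ∀ w, ¬ arcs l o v w ∧ ¬ arcs l o w v := by
  intro l
  induction l with
  | nil => intro o h; simp at h
  | cons m t ih =>
    intro o h
    by_cases hm : Odd m
    · obtain ⟨k, hk⟩ := hm
      refine ⟨o + k, by omega, by simp [List.sum_cons]; omega, ?_⟩
      intro w
      constructor
      · rintro (⟨k', hk', h1, h2⟩ | hh)
        · omega
        · have := arcs_bounds t (o + m) _ _ hh; omega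
      · rintro (⟨k', hk', h1, h2⟩ | hh)
        · omega
        · have := arcs_bounds t (o + m) _ _ hh; omega
    · have ht : ∃ m' ∈ t, Odd m' := by
        rcases h with ⟨m', hm', hodd⟩
        rcases List.mem_cons.mp hm' with rfl | hmem
        · exact absurd hodd hm
        · exact ⟨m', hmem, hodd⟩
      obtain ⟨v, hv1, hv2, hv3⟩ := ih (o + m) ht
      refine ⟨v, by omega, by simp [List.sum_cons]; omega, ?_⟩
      intro w
      constructor
      · rintro (⟨k', hk', h1, h2⟩ | hh)
        · omega
        · exact (hv3 w).1 hh
      · rintro (⟨k', hk', h1, h2⟩ | hh)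
        · omega
        · exact (hv3 w).2 hh

lemma odd_mem_of_odd_sum : ∀ (l : List ℕ), Odd l.sum → ∃ m ∈ l, Odd m := by
  intro l
  induction l with
  | nil => intro h; simp [Nat.odd_iff] at h
  | cons m t ih =>
    intro h
    rcases Nat.even_or_odd m with hm | hm
    · have : Odd t.sum := by
        rw [List.sum_cons] at h
        rcases Nat.even_or_odd t.sum with he | ho
        · exfalso; rcases hm with ⟨c, hc⟩; rcases he with ⟨d, hd⟩; rcases h with ⟨e, he2⟩; omega
        · exact ho
      obtain ⟨m', h1, h2⟩ := ih this
      exact ⟨m', List.mem_cons_of_mem _ h1, h2⟩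
    · exact ⟨m, List.mem_cons_self, hm⟩

/-- In a meander graph, the neighbor set of any vertex uncovered on the `l1` side is
a subsingleton. -/
lemma nbrs_subsingleton_top {N : ℕ} (l1 l2 : List ℕ) (v : Fin N)
    (hv : ∀ w, ¬ arcs l1 0 v.val w ∧ ¬ arcs l1 0 w v.val) :
    ((meanderA N l1 l2).neighborSet v).Subsingleton := by
  intro w1 h1 w2 h2
  obtain ⟨-, h1⟩ := h1
  obtain ⟨-, h2⟩ := h2
  have k1 : arcs l2 0 v.val w1.val ∨ arcs l2 0 w1.val v.val := by
    rcases h1 with h | h | h | h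
    · exact absurd h (hv _).1
    · exact absurd h (hv _).2
    · exact Or.inl h
    · exact Or.inr h
  have k2 : arcs l2 0 v.val w2.val ∨ arcs l2 0 w2.val v.val := by
    rcases h2 with h | h | h | h
    · exact absurd h (hv _).1
    · exact absurd h (hv _).2
    · exact Or.inl h
    · exact Or.inr h
  exact Fin.ext (partner_unique l2 0 v.val w1.val w2.val k1 k2)

lemma nbrs_subsingleton_bot {N : ℕ} (l1 l2 : List ℕ) (v : Fin N)
    (hv : ∀ w, ¬ arcs l2 0 v.val w ∧ ¬ arcs l2 0 w v.val) :
    ((meanderA N l1 l2).neighborSet v).Subsingleton := by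
  intro w1 h1 w2 h2
  obtain ⟨-, h1⟩ := h1
  obtain ⟨-, h2⟩ := h2
  have k1 : arcs l1 0 v.val w1.val ∨ arcs l1 0 w1.val v.val := by
    rcases h1 with h | h | h | h
    · exact Or.inl h
    · exact Or.inr h
    · exact absurd h (hv _).1
    · exact absurd h (hv _).2
  have k2 : arcs l1 0 v.val w2.val ∨ arcs l1 0 w2.val v.val := by
    rcases h2 with h | h | h | h
    · exact Or.inl h
    · exact Or.inr h
    · exact absurd h (hv _).1
    · exact absurd h (hv _).2
  exact Fin.ext (partner_unique l1 0 v.val w1.val w2.val k1 k2)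

lemma numCycles_eq_zero {V : Type*} [Finite V] {G : SimpleGraph V}
    (hconn : G.Connected) (v : V) (hv : (G.neighborSet v).ncard ≠ 2) :
    numCycles G = 0 := by
  have hempty : {c : G.ConnectedComponent | IsCycleComp G c} = ∅ := by
    ext c
    simp only [Set.mem_setOf_eq, Set.mem_empty_iff_false, iff_false]
    intro hc
    have hcv : G.connectedComponentMk v = c := by
      induction c using SimpleGraph.ConnectedComponent.ind with
      | _ u => exact SimpleGraph.ConnectedComponent.sound (hconn.preconnected v u)
    exact hv (hc v hcv)
  rw [numCycles, hempty, Set.ncard_empty]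

lemma comps_all_eq {V : Type*} {G : SimpleGraph V} (hconn : G.Connected)
    (c : G.ConnectedComponent) (v : V) : c = G.connectedComponentMk v := by
  induction c using SimpleGraph.ConnectedComponent.ind with
  | _ u => exact SimpleGraph.ConnectedComponent.sound (hconn.preconnected u v)

end GraphTools
section Core

/-- Fold the right half onto the left half. -/
def projL (n : ℕ) : Fin (2 * n) → Fin n := fun x =>
  if h : x.val < n then ⟨x.val, h⟩ else ⟨2 * n - 1 - x.val, by have := x.isLt; omega⟩

/-- Left-half embedding. -/
def embL (n : ℕ) : Fin n → Fin (2 * n) := fun u => ⟨u.val, by have := u.isLt; omega⟩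

/-- Right-half (mirrored) embedding. -/
def embR (n : ℕ) : Fin n → Fin (2 * n) := fun u => ⟨2 * n - 1 - u.val, by have := u.isLt; omega⟩

variable {n : ℕ} {a b : List ℕ} (hn : 1 ≤ n) (ha : IsComposition a) (hb : IsComposition b)
  (hsa : a.sum = n - 1) (hsb : b.sum = n)

include hn ha hb hsa hsb in
lemma projL_hom : ∀ x y, (meanderC n a b).Adj x y →
    projL n x = projL n y ∨ (meanderA n (a ++ [1]) b).Adj (projL n x) (projL n y) := by
  intro x y h
  by_cases hx : x.val < n <;> by_cases hy : y.val < n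
  · right
    have := left_edge hn ha hb hsa hsb h hx hy
    simp only [projL, dif_pos hx, dif_pos hy]
    exact this
  · left
    have hc := cross_edge hn ha hb hsa hsb h hx (le_of_not_gt hy)
    apply Fin.ext
    simp only [projL, dif_pos hx, dif_neg hy]
    omega
  · left
    have hc := cross_edge hn ha hb hsa hsb h.symm hy (le_of_not_gt hx)
    apply Fin.ext
    simp only [projL, dif_neg hx, dif_pos hy]
    omega
  · right
    have := right_edge hn ha hb hsa hsb h (le_of_not_gt hx) (le_of_not_gt hy)
    simp only [projL, dif_neg hx, dif_neg hy]
    exact this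

include hn ha hb hsa hsb in
lemma cross_reach : ∀ {x y : Fin (2 * n)} (_ : (meanderC n a b).Walk x y),
    x.val < n → n ≤ y.val → (meanderC n a b).Reachable x ⟨n - 1, by omega⟩ := by
  intro x y p
  induction p with
  | nil => intro hx hy; exact absurd hy (by omega)
  | @cons u v w hadj q ih =>
    intro hx hy
    by_cases hv : v.val < n
    · exact (hadj.reachable).trans (ih hv hy)
    · have hc := cross_edge hn ha hb hsa hsb hadj hx (le_of_not_gt hv)
      have he : u = ⟨n - 1, by omega⟩ := Fin.ext hc.1
      rw [he]

lemma sigmaRefl_val (x : Fin (2 * n)) : (sigmaRefl n x).val = 2 * n - 1 - x.val := rfl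

include hn ha hb hsa hsb in
lemma connC_of_counts (hC0 : numCycles (meanderC n a b) = 0)
    (hS0 : numNonStableSegments n a b = 0) : (meanderC n a b).Connected := by
  set G := meanderC n a b with hG
  have hcyc : {c : G.ConnectedComponent | IsCycleComp G c} = ∅ :=
    (Set.ncard_eq_zero (Set.toFinite _)).mp hC0
  have hseg : {c : G.ConnectedComponent |
      IsSegmentComp G c ∧ ¬ SigmaStable n G c} = ∅ :=
    (Set.ncard_eq_zero (Set.toFinite _)).mp hS0
  have hstable : ∀ c : G.ConnectedComponent, SigmaStable n G c := by
    intro c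
    by_contra hns
    have hsegc : IsSegmentComp G c := by
      intro hcy
      exact absurd (Set.eq_empty_iff_forall_notMem.mp hcyc c) (by simp [hcy])
    exact absurd (Set.eq_empty_iff_forall_notMem.mp hseg c) (by simp [hsegc, hns])
  have key : ∀ x : Fin (2 * n),
      G.connectedComponentMk x = G.connectedComponentMk ⟨n - 1, by omega⟩ := by
    intro x
    have hst := hstable (G.connectedComponentMk x) x rfl
    have hreach : G.Reachable (sigmaRefl n x) x :=
      SimpleGraph.ConnectedComponent.exact hst
    have hxlt := x.isLt
    by_cases hx : x.val < n
    · have hs : n ≤ (sigmaRefl n x).val := by rw [sigmaRefl_val]; omega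
      obtain ⟨p⟩ := hreach.symm
      exact SimpleGraph.ConnectedComponent.sound
        (cross_reach hn ha hb hsa hsb p hx hs)
    · have hs : (sigmaRefl n x).val < n := by rw [sigmaRefl_val]; omega
      obtain ⟨p⟩ := id hreach
      have h2 := cross_reach hn ha hb hsa hsb p hs (le_of_not_gt hx)
      exact SimpleGraph.ConnectedComponent.sound (hreach.symm.trans h2)
  exact (SimpleGraph.connected_iff_exists_forall_reachable _).mpr ⟨⟨n - 1, by omega⟩, fun w =>
    (SimpleGraph.ConnectedComponent.exact (key w)).symm⟩

include hn hsa in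
lemma uncovered_top_A :
    ∀ w, ¬ arcs (a ++ [1]) 0 (n - 1) w ∧ ¬ arcs (a ++ [1]) 0 w (n - 1) := by
  intro w
  constructor
  · intro h
    rcases (arcs_append a [1] 0 _ _).mp h with h | h
    · have := arcs_bounds a 0 _ _ h; omega
    · rcases h with ⟨k, hk, -, -⟩ | h
      · omega
      · exact absurd h (arcs_nil _ _ _)
  · intro h
    rcases (arcs_append a [1] 0 _ _).mp h with h | h
    · have := arcs_bounds a 0 _ _ h; omega
    · rcases h with ⟨k, hk, -, -⟩ | h
      · omega
      · exact absurd h (arcs_nil _ _ _)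

include hn ha hb hsa hsb in
lemma forward_core (hC0 : numCycles (meanderC n a b) = 0)
    (hS0 : numNonStableSegments n a b = 0) :
    (meanderA n (a ++ [1]) b).Connected ∧ numCycles (meanderA n (a ++ [1]) b) = 0 := by
  have hCc := connC_of_counts hn ha hb hsa hsb hC0 hS0
  have hpre : ∀ u v : Fin n, (meanderA n (a ++ [1]) b).Reachable u v := by
    intro u v
    have hr := hCc.preconnected (embL n u) (embL n v)
    have := reachable_map (projL n) (projL_hom hn ha hb hsa hsb) hr
    have e1 : projL n (embL n u) = u := by
      apply Fin.ext; simp [projL, embL, u.isLt]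
    have e2 : projL n (embL n v) = v := by
      apply Fin.ext; simp [projL, embL, v.isLt]
    rwa [e1, e2] at this
  have hconn : (meanderA n (a ++ [1]) b).Connected :=
    (SimpleGraph.connected_iff_exists_forall_reachable _).mpr
      ⟨⟨0, by omega⟩, fun w => hpre _ w⟩
  refine ⟨hconn, ?_⟩
  apply numCycles_eq_zero hconn ⟨n - 1, by omega⟩
  have hsub := nbrs_subsingleton_top (a ++ [1]) b (⟨n - 1, by omega⟩ : Fin n)
    (uncovered_top_A hn hsa)
  have : ((meanderA n (a ++ [1]) b).neighborSet ⟨n - 1, by omega⟩).ncard ≤ 1 :=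
    (Set.ncard_le_one_iff (Set.toFinite _)).mpr (fun h1 h2 => hsub h1 h2)
  omega

include hn ha hb hsa hsb in
lemma connC_of_connA (hconn : (meanderA n (a ++ [1]) b).Connected) :
    (meanderC n a b).Connected := by
  have key : ∀ x : Fin (2 * n), (meanderC n a b).Reachable x ⟨n - 1, by omega⟩ := by
    intro x
    have hxlt := x.isLt
    by_cases hx : x.val < n
    · have hr := hconn.preconnected ⟨x.val, hx⟩ ⟨n - 1, by omega⟩
      have hrc := reachable_map (embL n)
        (fun u v h => Or.inr (lift_left hn ha hb hsa hsb h)) hr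
      have e1 : embL n ⟨x.val, hx⟩ = x := Fin.ext rfl
      have e2 : embL n ⟨n - 1, by omega⟩ = (⟨n - 1, by omega⟩ : Fin (2 * n)) := Fin.ext rfl
      rwa [e1, e2] at hrc
    · have hr := hconn.preconnected ⟨2 * n - 1 - x.val, by omega⟩ ⟨n - 1, by omega⟩
      have hrc := reachable_map (embR n)
        (fun u v h => Or.inr (lift_right hn ha hb hsa hsb h)) hr
      have e1 : embR n ⟨2 * n - 1 - x.val, by omega⟩ = x := Fin.ext (by simp [embR]; omega)
      have e2 : embR n ⟨n - 1, by omega⟩ = (⟨n, by omega⟩ : Fin (2 * n)) :=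
        Fin.ext (by simp [embR]; omega)
      rw [e1, e2] at hrc
      exact hrc.trans ((bridge_edge hn ha hsa hsb).reachable).symm
  exact (SimpleGraph.connected_iff_exists_forall_reachable _).mpr
    ⟨⟨n - 1, by omega⟩, fun w => (key w).symm⟩

include hn ha hb hsa hsb in
lemma backward_core (hconn : (meanderA n (a ++ [1]) b).Connected) :
    topIndex n a b = 0 := by
  have hCc := connC_of_connA hn ha hb hsa hsb hconn
  have hC0 : numCycles (meanderC n a b) = 0 := by
    have hodd : (∃ m ∈ tildeComp n a, Odd m) ∨ (∃ m ∈ tildeComp n b, Odd m) := by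
      rcases Nat.even_or_odd n with he | ho
      · left
        obtain ⟨m, hm, hmo⟩ := odd_mem_of_odd_sum a (by
          rw [hsa]; rcases he with ⟨k, hk⟩; exact ⟨k - 1, by omega⟩)
        exact ⟨m, by rw [tildeA_eq hn ha hsa]; simp [hm], hmo⟩
      · right
        obtain ⟨m, hm, hmo⟩ := odd_mem_of_odd_sum b (by rw [hsb]; exact ho)
        exact ⟨m, by rw [tildeB_eq hb hsb]; simp [hm], hmo⟩
    have hsumA : (tildeComp n a).sum = 2 * n := by
      rw [tildeA_eq hn ha hsa]
      simp [List.sum_reverse, hsa]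
      omega
    have hsumB : (tildeComp n b).sum = 2 * n := by
      rw [tildeB_eq hb hsb]
      simp [List.sum_reverse, hsb]
      omega
    rcases hodd with hodd | hodd
    · obtain ⟨v, -, hv2, hv3⟩ := exists_uncovered (tildeComp n a) 0 hodd
      rw [Nat.zero_add, hsumA] at hv2
      apply numCycles_eq_zero hCc ⟨v, hv2⟩
      have hsub := nbrs_subsingleton_top (tildeComp n a) (tildeComp n b)
        (⟨v, hv2⟩ : Fin (2 * n)) hv3
      have : ((meanderC n a b).neighborSet ⟨v, hv2⟩).ncard ≤ 1 :=
        (Set.ncard_le_one_iff (Set.toFinite _)).mpr (fun h1 h2 => hsub h1 h2)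
      omega
    · obtain ⟨v, -, hv2, hv3⟩ := exists_uncovered (tildeComp n b) 0 hodd
      rw [Nat.zero_add, hsumB] at hv2
      apply numCycles_eq_zero hCc ⟨v, hv2⟩
      have hsub := nbrs_subsingleton_bot (tildeComp n a) (tildeComp n b)
        (⟨v, hv2⟩ : Fin (2 * n)) hv3
      have : ((meanderC n a b).neighborSet ⟨v, hv2⟩).ncard ≤ 1 :=
        (Set.ncard_le_one_iff (Set.toFinite _)).mpr (fun h1 h2 => hsub h1 h2)
      omega
  have hS0 : numNonStableSegments n a b = 0 := by
    have hempty : {c : (meanderC n a b).ConnectedComponent |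
        IsSegmentComp (meanderC n a b) c ∧ ¬ SigmaStable n (meanderC n a b) c} = ∅ := by
      rw [Set.eq_empty_iff_forall_notMem]
      intro c hc
      exact hc.2 (fun v hv => (SimpleGraph.ConnectedComponent.sound
        (hCc.preconnected (sigmaRefl n v) v)).trans hv)
    rw [numNonStableSegments, hempty, Set.ncard_empty]
  rw [topIndex, hC0, hS0]
  norm_num

end Core

lemma counts_of_topIndex {n : ℕ} {a b : List ℕ} (h : topIndex n a b = 0) :
    numCycles (meanderC n a b) = 0 ∧ numNonStableSegments n a b = 0 := by
  rw [topIndex] at h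
  have h1 : (0:ℚ) ≤ (numCycles (meanderC n a b) : ℚ) := Nat.cast_nonneg _
  have h2 : (0:ℚ) ≤ (numNonStableSegments n a b : ℚ) := Nat.cast_nonneg _
  have hc : (numCycles (meanderC n a b) : ℚ) = 0 := by linarith
  have hs : (numNonStableSegments n a b : ℚ) = 0 := by linarith
  exact ⟨by exact_mod_cast hc, by exact_mod_cast hs⟩


/-- The map `(a|b) ↦ ((a,1)|b)` is a bijection between `F_{n,1}` and the
Frobenius seaweeds of `sl_n` whose first composition has last part `1`. -/
theorem F1_bijection_typeA (n : ℕ) (hn : 1 ≤ n) :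
    Set.BijOn (fun p : List ℕ × List ℕ => (p.1 ++ [1], p.2)) (F1 n)
      {q ∈ AFrobSeg n | q.1.getLast? = some 1} := by
  refine ⟨?_, ?_, ?_⟩
  · -- MapsTo
    rintro ⟨a, b⟩ ⟨ha, hb, hsa, hsb, htop⟩
    obtain ⟨hC0, hS0⟩ := counts_of_topIndex htop
    have hsa2 : a.sum = n - 1 := hsa
    have hsb2 : b.sum = n := hsb
    obtain ⟨hconn, hcyc⟩ := forward_core hn ha hb hsa hsb hC0 hS0
    refine ⟨⟨?_, hb, ?_, hsb, hconn, hcyc⟩, ?_⟩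
    · intro x hx
      rcases List.mem_append.mp hx with h | h
      · exact ha x h
      · simp at h; omega
    · rw [List.sum_append]; simp; omega
    · exact List.getLast?_concat
  · -- InjOn
    rintro ⟨a1, b1⟩ - ⟨a2, b2⟩ - h
    simp only [Prod.mk.injEq] at h
    obtain ⟨h1, h2⟩ := h
    exact Prod.ext (List.append_cancel_right h1) h2
  · -- SurjOn
    rintro ⟨a', b⟩ ⟨⟨ha', hb, hsa', hsb, hconn, hcyc⟩, hlast⟩
    have hne : a' ≠ [] := by
      intro e; rw [e] at hlast; simp at hlast
    have hget : a'.getLast hne = 1 := by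
      rw [List.getLast?_eq_getLast hne] at hlast
      injection hlast
    have heq : a'.dropLast ++ [1] = a' := by
      rw [← hget]; exact List.dropLast_append_getLast hne
    have hacomp : IsComposition a'.dropLast := by
      intro x hx; exact ha' x ((List.dropLast_sublist a').subset hx)
    have hsum : a'.dropLast.sum = n - 1 := by
      have : (a'.dropLast ++ [1]).sum = n := by rw [heq]; exact hsa'
      rw [List.sum_append] at this; simp at this; omega
    have hconn' : (meanderA n (a'.dropLast ++ [1]) b).Connected := by
      rw [heq]; exact hconn
    refine ⟨(a'.dropLast, b), ⟨hacomp, hb, hsum, hsb, ?_⟩, ?_⟩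
    · exact backward_core hn hacomp hb hsum hsb hconn'
    · show (a'.dropLast ++ [1], b) = (a', b)
      rw [heq]
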